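/- The real vector space of linear maps T : ℝ^{n×n} → ℝ^{n×n} satisfying T(σ·X) = σ·T(X) for all σ ∈ S_n and X ∈ ℝ^{n×n} has dimension exactly 14 when n = 3, and dimension exactly 8 when n = 2. -/

import Mathlib

/-!
In the standard basis an endomorphism `T` of `ℝⁿˣⁿ` is a kernel `T_{(i,j),(k,l)}`, and since `Sₙ`
permutes that basis, `T` is equivariant exactly when the kernel is constant on the orbits of `Sₙ`
acting diagonally on quadruples `(i, j, k, l)`. The dimension is therefore the number of these
orbits. The orbit of a quadruple is its pattern of equalities, a partition of the four positions
into at most `n` blocks: for `n = 3` all 15 partitions but the one into singletons, for `n = 2`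
the single one-block partition and the 7 two-block ones.
-/

open Matrix

namespace IGN2small

variable (n : ℕ)

/-- The action of `Sₙ` on `n × n` matrices: `(σ · X) i j = X (σ⁻¹ i) (σ⁻¹ j)`. -/
def act (σ : Equiv.Perm (Fin n)) (X : Matrix (Fin n) (Fin n) ℝ) :
    Matrix (Fin n) (Fin n) ℝ :=
  Matrix.of fun i j => X (σ⁻¹ i) (σ⁻¹ j)

theorem act_add (σ : Equiv.Perm (Fin n)) (X Y : Matrix (Fin n) (Fin n) ℝ) :
    act n σ (X + Y) = act n σ X + act n σ Y := by
  ext i j; simp [act]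

theorem act_smul (σ : Equiv.Perm (Fin n)) (c : ℝ) (X : Matrix (Fin n) (Fin n) ℝ) :
    act n σ (c • X) = c • act n σ X := by
  ext i j; simp [act]

/-- The space of `Sₙ`-equivariant linear endomorphisms of `ℝⁿˣⁿ`. -/
noncomputable def EquivariantMaps :
    Submodule ℝ (Matrix (Fin n) (Fin n) ℝ →ₗ[ℝ] Matrix (Fin n) (Fin n) ℝ) where
  carrier := {T | ∀ (σ : Equiv.Perm (Fin n)) (X : Matrix (Fin n) (Fin n) ℝ),
    T (act n σ X) = act n σ (T X)}
  zero_mem' := by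
    intro σ X
    simp only [LinearMap.zero_apply]
    ext i j; simp [act]
  add_mem' := by
    intro T T' hT hT' σ X
    simp [LinearMap.add_apply, hT σ X, hT' σ X, act_add]
  smul_mem' := by
    intro c T hT σ X
    simp [LinearMap.smul_apply, hT σ X, act_smul]

open MulAction

section InvariantFunctions

variable (G α R : Type*) [Group G] [MulAction G α] [Semiring R]

def invariantFunctions : Submodule R (α → R) where
  carrier := {f | ∀ (g : G) a, f (g • a) = f a}
  zero_mem' _ _ := rfl
  add_mem' hf hf' g a := by simp [hf g a, hf' g a]
  smul_mem' c f hf g a := by simp [hf g a]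

def invariantFunctionsEquiv :
    invariantFunctions G α R ≃ₗ[R] (orbitRel.Quotient G α → R) where
  toFun f := Quotient.lift (f : α → R) fun a b hab => by
    obtain ⟨g, rfl⟩ := orbitRel_apply.mp hab
    exact f.2 g b
  map_add' f f' := by ext q; induction q using Quotient.ind; rfl
  map_smul' c f := by ext q; induction q using Quotient.ind; rfl
  invFun φ := ⟨φ ∘ Quotient.mk _, fun g a => congrArg φ (Quotient.sound (mem_orbit a g))⟩
  left_inv f := rfl
  right_inv φ := by ext q; induction q using Quotient.ind; rfl

theorem finrank_invariantFunctions [StrongRankCondition R] [Finite α] :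
    Module.finrank R (invariantFunctions G α R) = Nat.card (orbitRel.Quotient G α) := by
  have := Fintype.ofFinite (orbitRel.Quotient G α)
  rw [(invariantFunctionsEquiv G α R).finrank_eq, Module.finrank_pi, Nat.card_eq_fintype_card]

end InvariantFunctions

section PermutationModule

variable {G ι R V : Type*} [Group G] [MulAction G ι] [CommSemiring R] [AddCommMonoid V]
  [Module R V] {b : Module.Basis ι R V} {ρ : G → Module.End R V}

theorem repr_apply_smul_eq_of_permutes_basis (hρ : ∀ g i, ρ g (b i) = b (g • i)) (g : G) (v : V)
    (i : ι) : b.repr (ρ g v) (g • i) = b.repr v i := by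
  suffices (Finsupp.lapply (g • i)) ∘ₗ b.repr.toLinearMap ∘ₗ ρ g =
      (Finsupp.lapply i) ∘ₗ b.repr.toLinearMap from LinearMap.congr_fun this v
  refine b.ext fun j => ?_
  simp [hρ, Finsupp.single_apply_left (MulAction.injective g)]

theorem mem_centralizer_iff_toMatrix [Fintype ι] [DecidableEq ι]
    (hρ : ∀ g i, ρ g (b i) = b (g • i)) (T : Module.End R V) :
    T ∈ Subalgebra.centralizer R (Set.range ρ) ↔
      ∀ (g : G) p q, LinearMap.toMatrix b b T (g • p) (g • q) = LinearMap.toMatrix b b T p q := by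
  simp only [Subalgebra.mem_centralizer_iff, Set.forall_mem_range, LinearMap.toMatrix_apply,
    ← hρ]
  refine forall_congr' fun g => ⟨fun h p q => ?_, fun h => b.ext fun q => ?_⟩
  · rw [← Module.End.mul_apply, ← h, Module.End.mul_apply,
      repr_apply_smul_eq_of_permutes_basis hρ]
  · refine b.ext_elem_iff.mpr fun p' => ?_
    obtain ⟨p, rfl⟩ := MulAction.surjective g p'
    rw [Module.End.mul_apply, Module.End.mul_apply, repr_apply_smul_eq_of_permutes_basis hρ, h]

theorem finrank_centralizer_eq_card_orbits [Fintype ι] [DecidableEq ι] [StrongRankCondition R]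
    (hρ : ∀ g i, ρ g (b i) = b (g • i)) :
    Module.finrank R (Subalgebra.centralizer R (Set.range ρ)) =
      Nat.card (orbitRel.Quotient G (ι × ι)) := by
  let e : Module.End R V ≃ₗ[R] (ι × ι → R) :=
    (LinearMap.toMatrix b b).trans (LinearEquiv.curry R R ι ι).symm
  have hcomap : (invariantFunctions G (ι × ι) R).comap e.toLinearMap =
      (Subalgebra.centralizer R (Set.range ρ)).toSubmodule := by
    ext T
    rw [Submodule.mem_comap, Subalgebra.mem_toSubmodule, mem_centralizer_iff_toMatrix hρ]
    exact ⟨fun h g p q => h g (p, q), fun h g x => h g x.1 x.2⟩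
  rw [← Subalgebra.finrank_toSubmodule, ← hcomap, (e.ofSubmodule' _).finrank_eq,
    finrank_invariantFunctions]

end PermutationModule

def actLinear (σ : Equiv.Perm (Fin n)) : Module.End ℝ (Matrix (Fin n) (Fin n) ℝ) where
  toFun := act n σ
  map_add' := act_add n σ
  map_smul' := act_smul n σ

theorem act_single_one (σ : Equiv.Perm (Fin n)) (k l : Fin n) :
    act n σ (Matrix.single k l (1 : ℝ)) = Matrix.single (σ k) (σ l) 1 := by
  ext i j
  simp [act, Matrix.single, Equiv.Perm.inv_def, Equiv.eq_symm_apply]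

theorem equivariantMaps_eq_centralizer :
    EquivariantMaps n = (Subalgebra.centralizer ℝ (Set.range (actLinear n))).toSubmodule := by
  ext T
  simp only [Subalgebra.mem_toSubmodule, Subalgebra.mem_centralizer_iff, Set.forall_mem_range,
    LinearMap.ext_iff, Module.End.mul_apply]
  exact ⟨fun h σ X => (h σ X).symm, fun h σ X => (h σ X).symm⟩

theorem finrank_equivariantMaps :
    Module.finrank ℝ (EquivariantMaps n) =
      Nat.card (orbitRel.Quotient (Equiv.Perm (Fin n)) ((Fin n × Fin n) × (Fin n × Fin n))) := by
  rw [equivariantMaps_eq_centralizer, Subalgebra.finrank_toSubmodule]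
  refine finrank_centralizer_eq_card_orbits (b := Matrix.stdBasis ℝ (Fin n) (Fin n)) ?_
  rintro σ ⟨k, l⟩
  simp [Matrix.stdBasis_eq_single, actLinear, act_single_one]

instance decidableOrbitRel {G α : Type*} [Group G] [MulAction G α] [Fintype G] [DecidableEq α] :
    DecidableRel (orbitRel G α).r := fun a b =>
  decidable_of_iff (∃ g : G, g • b = a) (orbitRel_apply.trans mem_orbit_iff).symm

set_option maxRecDepth 100000 in
theorem card_orbits_fin_three :
    Nat.card (orbitRel.Quotient (Equiv.Perm (Fin 3)) ((Fin 3 × Fin 3) × (Fin 3 × Fin 3))) = 14 := by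
  rw [Nat.card_eq_fintype_card]
  decide

theorem card_orbits_fin_two :
    Nat.card (orbitRel.Quotient (Equiv.Perm (Fin 2)) ((Fin 2 × Fin 2) × (Fin 2 × Fin 2))) = 8 := by
  rw [Nat.card_eq_fintype_card]
  decide

/-- The space of `Sₙ`-equivariant linear endomorphisms of
`ℝⁿˣⁿ` has dimension 14 when `n = 3` and dimension 8 when `n = 2`. -/
theorem finrank_equivariantMaps_small_n :
    Module.finrank ℝ (EquivariantMaps 3) = 14 ∧
    Module.finrank ℝ (EquivariantMaps 2) = 8 :=
  ⟨(finrank_equivariantMaps 3).trans card_orbits_fin_three,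
    (finrank_equivariantMaps 2).trans card_orbits_fin_two⟩

end IGN2small
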